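/- The number of arrows of the graph Γ_{c_I} equals (1/2) Σ_{j=1}^k (n_I(i_j) − i_j − 1)(2r − i_j − n_I(i_j) + 2). In particular for I = {1} this number is (r−2)(r+1)/2. -/

import Mathlib

noncomputable section

open Finset

/-- `ee r i` is the standard basis vector `e_i` (1-based index) of `ℝ^r`. -/
def ee (r i : ℕ) : Fin r → ℝ := fun j => if (j : ℕ) + 1 = i then 1 else 0

/-- The type-`D_r` simple roots, 1-based: `α_i = e_i - e_{i+1}` for `i ≤ r-1`,
`α_r = e_{r-1} + e_r`. -/
def sroot (r i : ℕ) : Fin r → ℝ :=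
  if i = r then ee r (r - 1) + ee r r else ee r i - ee r (i + 1)

/-- Root-poset order: `ρ ≤ η` iff `η - ρ` is a non-negative integer combination
of the simple roots. -/
def rootLE (r : ℕ) (ρ η : Fin r → ℝ) : Prop :=
  ∃ m : ℕ → ℕ, η - ρ = ∑ i ∈ Finset.Icc 1 r, (m i : ℝ) • sroot r i

/-- The positive roots of type `D_r`: `e_i ± e_j` for `1 ≤ i < j ≤ r`. -/
def Pos (r : ℕ) : Set (Fin r → ℝ) :=
  {v | ∃ i j, 1 ≤ i ∧ i < j ∧ j ≤ r ∧ (v = ee r i - ee r j ∨ v = ee r i + ee r j)}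

/-- The `i`-th (1-based) coordinate of a vector. -/
def coordN (r : ℕ) (x : Fin r → ℝ) (i : ℕ) : ℝ :=
  ∑ j : Fin r, if (j : ℕ) + 1 = i then x j else 0

/-- The successor map on `I ∪ {r}`: least element of `I ∪ {r}` larger than `a`. -/
def nextI (r : ℕ) (I : Finset ℕ) (a : ℕ) : ℕ :=
  WithTop.untopD r (((insert r I).filter (fun x => a < x)).min)

/-- `min (I ∪ {r})`; equals `min I` for nonempty `I ⊆ {1,…,r-1}` and `r` for `I = ∅`. -/
def minI (r : ℕ) (I : Finset ℕ) : ℕ := WithTop.untopD r ((insert r I).min)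

/-- `max I` (0 if empty). -/
def maxI (I : Finset ℕ) : ℕ := WithBot.unbotD 0 (I.max)

/-- The increasing cycle `p_I` on `I ∪ {r}`, fixing all other points. -/
def pI (r : ℕ) (I : Finset ℕ) (a : ℕ) : ℕ :=
  if a ∈ I then nextI r I a else if a = r then minI r I else a

/-- Images of the basis vectors under `c_I`. -/
def cIb (r : ℕ) (I : Finset ℕ) (j : ℕ) : Fin r → ℝ :=
  if j = r then ee r (minI r I) else -(ee r (pI r I j))

/-- The signed permutation `c_I`, extended linearly; for `I = ∅` it is `w_0`. -/
def cI (r : ℕ) (I : Finset ℕ) (x : Fin r → ℝ) : Fin r → ℝ :=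
  ∑ j ∈ Finset.Icc 1 r, coordN r x j • cIb r I j

/-- Images of the basis vectors under `d_I`. -/
def dIb (r : ℕ) (I : Finset ℕ) (j : ℕ) : Fin r → ℝ :=
  if j = maxI I then ee r r
  else if j = r then -(ee r (minI r I))
  else -(ee r (pI r I j))

/-- The signed permutation `d_I`, extended linearly. -/
def dI (r : ℕ) (I : Finset ℕ) (x : Fin r → ℝ) : Fin r → ℝ :=
  ∑ j ∈ Finset.Icc 1 r, coordN r x j • dIb r I j

/-- The longest element `w_0` for `r` odd: `e_i ↦ -e_i` for `i < r`, `e_r ↦ e_r`. -/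
def w0 (r : ℕ) (x : Fin r → ℝ) : Fin r → ℝ :=
  fun j => if (j : ℕ) + 1 = r then x j else -(x j)

/-- The set `A_I`. -/
def AI (r : ℕ) (I : Finset ℕ) : Set (Fin r → ℝ) :=
  {v | ∃ a b, a ∈ I ∧ a < b ∧ b < nextI r I a ∧ v = ee r b - ee r (nextI r I a)}

/-- The set `B_I`. -/
def BI (r : ℕ) (I : Finset ℕ) : Set (Fin r → ℝ) :=
  {v | ∃ q, minI r I < q ∧ q ≤ r ∧ v = ee r (minI r I) - ee r q}

/-- `ν₀(u) = u(Π₊) ∩ Π₊`. -/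
def nu0 (r : ℕ) (u : (Fin r → ℝ) → (Fin r → ℝ)) : Set (Fin r → ℝ) :=
  {β | β ∈ Pos r ∧ ∃ γ ∈ Pos r, u γ = β}

/-- Arrow `α → β` in the rationality graph of `u`: `u⁻¹(α) ≤ β`,
expressed via a positive preimage `γ` of `α`. -/
def Arrow (r : ℕ) (u : (Fin r → ℝ) → (Fin r → ℝ)) (α β : Fin r → ℝ) : Prop :=
  ∃ γ ∈ Pos r, u γ = α ∧ rootLE r γ β

/-- The rationality graph of `u` has a directed cycle. -/
def HasCycle (r : ℕ) (u : (Fin r → ℝ) → (Fin r → ℝ)) : Prop :=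
  ∃ (n : ℕ) (f : ℕ → (Fin r → ℝ)), 0 < n ∧ (∀ i ≤ n, f i ∈ nu0 r u) ∧
    f 0 = f n ∧ ∀ i < n, Arrow r u (f i) (f (i + 1))

/-- The simple reflection `s_a` for `1 ≤ a ≤ r-1`: swaps coordinates `a` and `a+1`. -/
def sw (r a : ℕ) (x : Fin r → ℝ) : Fin r → ℝ := fun j =>
  if (j : ℕ) + 1 = a then coordN r x (a + 1)
  else if (j : ℕ) + 1 = a + 1 then coordN r x a
  else x j

/-- The spin reflection `s_r`: `e_{r-1} ↦ -e_r`, `e_r ↦ -e_{r-1}`. -/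
def sSpin (r : ℕ) (x : Fin r → ℝ) : Fin r → ℝ := fun j =>
  if (j : ℕ) + 1 = r - 1 then -(coordN r x r)
  else if (j : ℕ) + 1 = r then -(coordN r x (r - 1))
  else x j



lemma coordN_eq (r : ℕ) (x : Fin r → ℝ) (s : ℕ) :
    coordN r x s = if h : 1 ≤ s ∧ s ≤ r then x ⟨s-1, by omega⟩ else 0 := by
  unfold coordN
  split
  · rename_i h
    rw [Finset.sum_eq_single (⟨s-1, by omega⟩ : Fin r)]
    · rw [if_pos]; simp; omega
    · intro b _ hb
      rw [if_neg]
      intro hc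
      apply hb
      apply Fin.ext
      simp
      omega
    · intro h'; exact absurd (Finset.mem_univ _) h'
  · rename_i h
    apply Finset.sum_eq_zero
    intro j _
    rw [if_neg]
    omega

lemma coordN_ee (r i s : ℕ) :
    coordN r (ee r i) s = if s = i ∧ 1 ≤ s ∧ s ≤ r then 1 else 0 := by
  rw [coordN_eq]
  unfold ee
  split
  · rename_i h
    simp only []
    by_cases hsi : s = i
    · rw [if_pos (by omega), if_pos ⟨hsi, h⟩]
    · rw [if_neg (by omega), if_neg (by tauto)]
  · rename_i h
    rw [if_neg (by tauto)]

lemma coordN_ee' (r i s : ℕ) (h1 : 1 ≤ s) (h2 : s ≤ r) :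
    coordN r (ee r i) s = if s = i then 1 else 0 := by
  rw [coordN_ee]
  by_cases h : s = i
  · rw [if_pos h, if_pos ⟨h, h1, h2⟩]
  · rw [if_neg h, if_neg (by tauto)]

lemma coordN_add (r : ℕ) (x y : Fin r → ℝ) (s : ℕ) :
    coordN r (x + y) s = coordN r x s + coordN r y s := by
  rw [coordN_eq, coordN_eq, coordN_eq]; split <;> simp

lemma coordN_sub (r : ℕ) (x y : Fin r → ℝ) (s : ℕ) :
    coordN r (x - y) s = coordN r x s - coordN r y s := by
  rw [coordN_eq, coordN_eq, coordN_eq]; split <;> simp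

lemma coordN_neg (r : ℕ) (x : Fin r → ℝ) (s : ℕ) :
    coordN r (-x) s = - coordN r x s := by
  rw [coordN_eq, coordN_eq]; split <;> simp

lemma coordN_smul (r : ℕ) (c : ℝ) (x : Fin r → ℝ) (s : ℕ) :
    coordN r (c • x) s = c * coordN r x s := by
  rw [coordN_eq, coordN_eq]; split <;> simp

lemma coordN_sum (r : ℕ) {ι : Type*} (S : Finset ι) (g : ι → Fin r → ℝ) (s : ℕ) :
    coordN r (∑ i ∈ S, g i) s = ∑ i ∈ S, coordN r (g i) s := by
  classical
  induction S using Finset.induction with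
  | empty => simp [coordN_eq]
  | insert _ _ h ih =>
    rw [Finset.sum_insert h, Finset.sum_insert h, coordN_add, ih]

/-- The functional `x ↦ ∑_{s=1}^t x_s`. -/
def Lf (r t : ℕ) (x : Fin r → ℝ) : ℝ := ∑ s ∈ Icc 1 t, coordN r x s

lemma Lf_ee (r t i : ℕ) (htr : t ≤ r) (h1 : 1 ≤ i) (h2 : i ≤ r) :
    Lf r t (ee r i) = if i ≤ t then 1 else 0 := by
  unfold Lf
  rw [Finset.sum_congr rfl (fun s hs => coordN_ee' r i s (by simp at hs; omega) (by simp at hs; omega))]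
  rw [Finset.sum_ite_eq']
  simp [Finset.mem_Icc, h1]

lemma Lf_add (r t : ℕ) (x y : Fin r → ℝ) : Lf r t (x + y) = Lf r t x + Lf r t y := by
  unfold Lf; rw [← Finset.sum_add_distrib]; exact Finset.sum_congr rfl fun s _ => coordN_add ..

lemma Lf_sub (r t : ℕ) (x y : Fin r → ℝ) : Lf r t (x - y) = Lf r t x - Lf r t y := by
  unfold Lf; rw [← Finset.sum_sub_distrib]; exact Finset.sum_congr rfl fun s _ => coordN_sub ..

lemma Lf_neg (r t : ℕ) (x : Fin r → ℝ) : Lf r t (-x) = - Lf r t x := by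
  unfold Lf; rw [← Finset.sum_neg_distrib]; exact Finset.sum_congr rfl fun s _ => coordN_neg ..

lemma Lf_smul (r t : ℕ) (c : ℝ) (x : Fin r → ℝ) : Lf r t (c • x) = c * Lf r t x := by
  unfold Lf; rw [Finset.mul_sum]; exact Finset.sum_congr rfl fun s _ => coordN_smul ..

lemma Lf_sum (r t : ℕ) {ι : Type*} (S : Finset ι) (g : ι → Fin r → ℝ) :
    Lf r t (∑ i ∈ S, g i) = ∑ i ∈ S, Lf r t (g i) := by
  unfold Lf
  rw [Finset.sum_comm]
  exact Finset.sum_congr rfl fun s _ => coordN_sum ..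

lemma Lf_sroot_nonneg (r t i : ℕ) (hr : 2 ≤ r) (htr : t ≤ r) (h1 : 1 ≤ i) (h2 : i ≤ r) :
    0 ≤ Lf r t (sroot r i) := by
  unfold sroot
  split
  · rw [Lf_add, Lf_ee r t _ htr (by omega) (by omega), Lf_ee r t _ htr (by omega) (by omega)]
    split <;> split <;> norm_num
  · rename_i h
    rw [Lf_sub, Lf_ee r t _ htr h1 h2, Lf_ee r t _ htr (by omega) (by omega)]
    split <;> split <;> (try norm_num) <;> omega

lemma not_rootLE (r t : ℕ) (hr : 2 ≤ r) (htr : t ≤ r) (ρ η : Fin r → ℝ)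
    (hneg : Lf r t η - Lf r t ρ < 0) : ¬ rootLE r ρ η := by
  rintro ⟨m, hm⟩
  have h1 : Lf r t (η - ρ) = Lf r t η - Lf r t ρ := Lf_sub ..
  rw [hm, Lf_sum] at h1
  have h2 : 0 ≤ ∑ i ∈ Icc 1 r, Lf r t ((m i : ℝ) • sroot r i) := by
    apply Finset.sum_nonneg
    intro i hi
    simp only [Finset.mem_Icc] at hi
    rw [Lf_smul]
    exact mul_nonneg (by positivity) (Lf_sroot_nonneg r t i hr htr hi.1 hi.2)
  linarith

lemma telescope {M : Type*} [AddCommGroup M] (f : ℕ → M) (lo : ℕ) :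
    ∀ hi, lo ≤ hi → ∑ i ∈ Ico lo hi, (f i - f (i+1)) = f lo - f hi := by
  intro hi
  induction hi with
  | zero => intro h; interval_cases lo; simp
  | succ n ih =>
    intro h
    rcases Nat.lt_or_ge lo (n+1) with h' | h'
    · rw [Finset.sum_Ico_succ_top (by omega), ih (by omega)]
      abel
    · have : lo = n + 1 := by omega
      subst this
      simp

lemma sub_ee_inj (r a b c d : ℕ) (ha1 : 1 ≤ a) (har : a ≤ r) (hb1 : 1 ≤ b) (hbr : b ≤ r)
    (hc1 : 1 ≤ c) (hcr : c ≤ r) (hd1 : 1 ≤ d) (hdr : d ≤ r) (hcd : c ≠ d)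
    (h : ee r a - ee r b = ee r c - ee r d) : a = c ∧ b = d := by
  have h1 := congrArg (fun v => coordN r v c) h
  have h2 := congrArg (fun v => coordN r v d) h
  simp only [coordN_sub] at h1 h2
  rw [coordN_ee' r a c hc1 hcr, coordN_ee' r b c hc1 hcr, coordN_ee' r c c hc1 hcr,
    coordN_ee' r d c hc1 hcr] at h1
  rw [coordN_ee' r a d hd1 hdr, coordN_ee' r b d hd1 hdr, coordN_ee' r c d hd1 hdr,
    coordN_ee' r d d hd1 hdr] at h2
  split_ifs at h1 h2 <;> norm_num at h1 <;> norm_num at h2 <;> omega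


lemma sum_ind_sroot (r a b : ℕ) (h1 : 1 ≤ a) (h2 : a ≤ b) (h3 : b ≤ r) :
    (∑ i ∈ Icc 1 r, (if a ≤ i ∧ i < b then (1:ℝ) else 0) • sroot r i) = ee r a - ee r b := by
  have e1 : ∀ i ∈ Icc 1 r, (if a ≤ i ∧ i < b then (1:ℝ) else 0) • sroot r i
      = if a ≤ i ∧ i < b then sroot r i else 0 := by
    intro i _; split <;> simp
  rw [Finset.sum_congr rfl e1, ← Finset.sum_filter]
  have e2 : (Icc 1 r).filter (fun i => a ≤ i ∧ i < b) = Ico a b := by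
    ext i; simp [Finset.mem_Icc, Finset.mem_Ico]; omega
  rw [e2]
  have e3 : ∀ i ∈ Ico a b, sroot r i = ee r i - ee r (i+1) := by
    intro i hi
    simp only [Finset.mem_Ico] at hi
    unfold sroot
    rw [if_neg (by omega)]
  rw [Finset.sum_congr rfl e3, telescope (fun i => ee r i) a b h2]

lemma rootLE_of_eq (r lo hi lo' hi' : ℕ) (hlo : 1 ≤ lo) (hlh : lo ≤ hi) (hhr : hi ≤ r)
    (hlo' : 1 ≤ lo') (hlh' : lo' ≤ hi') (hhr' : hi' ≤ r) (ρ η : Fin r → ℝ)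
    (heq : η - ρ = (ee r lo - ee r hi) + (ee r lo' - ee r hi')) : rootLE r ρ η := by
  refine ⟨fun i => (if lo ≤ i ∧ i < hi then 1 else 0) + (if lo' ≤ i ∧ i < hi' then 1 else 0), ?_⟩
  rw [heq]
  have e0 : ∀ i ∈ Icc 1 r,
      (((if lo ≤ i ∧ i < hi then (1:ℕ) else 0) + (if lo' ≤ i ∧ i < hi' then (1:ℕ) else 0) : ℕ) : ℝ) • sroot r i
      = (if lo ≤ i ∧ i < hi then (1:ℝ) else 0) • sroot r i
        + (if lo' ≤ i ∧ i < hi' then (1:ℝ) else 0) • sroot r i := by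
    intro i _
    rw [← add_smul]
    congr 1
    push_cast
    split <;> split <;> norm_num
  rw [Finset.sum_congr rfl e0, Finset.sum_add_distrib,
    sum_ind_sroot r lo hi hlo hlh hhr, sum_ind_sroot r lo' hi' hlo' hlh' hhr']

section
variable {r : ℕ} {I : Finset ℕ} (hr : 5 ≤ r) (hI : I.Nonempty) (hIs : I ⊆ Finset.Icc 1 (r - 1))
include hr hI hIs

lemma mem_bounds {a : ℕ} (ha : a ∈ I) : 1 ≤ a ∧ a ≤ r - 1 := by
  have := hIs ha; simp [Finset.mem_Icc] at this; exact this

lemma minI_spec : minI r I ∈ I ∧ ∀ a ∈ I, minI r I ≤ a := by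
  obtain ⟨a0, ha0⟩ := id hI
  have hne : (insert r I).Nonempty := ⟨a0, Finset.mem_insert_of_mem ha0⟩
  obtain ⟨x, hx⟩ := Finset.min_of_nonempty hne
  have hxmem : x ∈ insert r I := Finset.mem_of_min hx
  have hmin : ∀ b ∈ insert r I, x ≤ b := fun b hb => Finset.min_le_of_eq hb hx
  have hval : minI r I = x := by unfold minI; rw [hx]; rfl
  rw [hval]
  have hxI : x ∈ I := by
    rcases Finset.mem_insert.mp hxmem with h | h
    · exfalso
      have := hmin a0 (Finset.mem_insert_of_mem ha0)
      have := mem_bounds hr hI hIs ha0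
      omega
    · exact h
  exact ⟨hxI, fun a ha => hmin a (Finset.mem_insert_of_mem ha)⟩

lemma nextI_spec {a : ℕ} (ha : a < r) :
    a < nextI r I a ∧ nextI r I a ≤ r ∧ nextI r I a ∈ insert r I ∧
      ∀ x ∈ insert r I, a < x → nextI r I a ≤ x := by
  set S := (insert r I).filter (fun x => a < x) with hS
  have hrS : r ∈ S := by
    rw [hS, Finset.mem_filter]
    exact ⟨Finset.mem_insert_self r I, ha⟩
  obtain ⟨x, hx⟩ := Finset.min_of_nonempty ⟨r, hrS⟩
  have hxmem : x ∈ S := Finset.mem_of_min hx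
  have hmin : ∀ b ∈ S, x ≤ b := fun b hb => Finset.min_le_of_eq hb hx
  have hval : nextI r I a = x := by unfold nextI; rw [← hS, hx]; rfl
  rw [hval, hS] at *
  simp only [Finset.mem_filter] at hxmem
  refine ⟨hxmem.2, ?_, hxmem.1, ?_⟩
  · rcases Finset.mem_insert.mp hxmem.1 with h | h
    · omega
    · have := mem_bounds hr hI hIs h; omega
  · intro y hy hay
    exact hmin y (Finset.mem_filter.mpr ⟨hy, hay⟩)

lemma r_notin_I : r ∉ I := by
  intro h; have := mem_bounds hr hI hIs h; omega

lemma notin_of_between {a b : ℕ} (hab : a < b) (hb : b < nextI r I a) : b ∉ I := by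
  intro hbI
  have har : a < r := by have := mem_bounds hr hI hIs hbI; omega
  have := (nextI_spec hr hI hIs har).2.2.2 b (Finset.mem_insert_of_mem hbI) hab
  omega

lemma nextI_le_of_mem {a a' : ℕ} (ha : a ∈ I) (ha' : a' ∈ I) (h : a < a') :
    nextI r I a ≤ a' := by
  have har : a < r := by have := mem_bounds hr hI hIs ha; omega
  exact (nextI_spec hr hI hIs har).2.2.2 a' (Finset.mem_insert_of_mem ha') h

lemma nextI_inj {a a' : ℕ} (ha : a ∈ I) (ha' : a' ∈ I) (h : nextI r I a = nextI r I a') :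
    a = a' := by
  have h1 := mem_bounds hr hI hIs ha
  have h2 := mem_bounds hr hI hIs ha'
  rcases Nat.lt_trichotomy a a' with hlt | heq | hgt
  · have := nextI_le_of_mem hr hI hIs ha ha' hlt
    have := (nextI_spec hr hI hIs (show a' < r by omega)).1
    omega
  · exact heq
  · have := nextI_le_of_mem hr hI hIs ha' ha hgt
    have := (nextI_spec hr hI hIs (show a < r by omega)).1
    omega

lemma pI_mem (a : ℕ) (ha : a ∈ I) : pI r I a = nextI r I a := by
  unfold pI; rw [if_pos ha]

lemma pI_self (a : ℕ) (ha : a ∉ I) (har : a ≠ r) : pI r I a = a := by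
  unfold pI; rw [if_neg ha, if_neg har]

lemma pI_r : pI r I r = minI r I := by
  unfold pI; rw [if_neg (r_notin_I hr hI hIs), if_pos rfl]

lemma pI_bounds {a : ℕ} (h1 : 1 ≤ a) (h2 : a ≤ r) : 1 ≤ pI r I a ∧ pI r I a ≤ r := by
  by_cases ha : a ∈ I
  · rw [pI_mem hr hI hIs _ ha]
    have hb := mem_bounds hr hI hIs ha
    have := nextI_spec hr hI hIs (show a < r by omega)
    omega
  · by_cases har : a = r
    · subst har
      rw [pI_r hr hI hIs]
      have := minI_spec hr hI hIs
      have := mem_bounds hr hI hIs this.1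
      omega
    · rw [pI_self hr hI hIs _ ha har]; omega

lemma pI_ge {a : ℕ} (h2 : a < r) : a ≤ pI r I a := by
  by_cases ha : a ∈ I
  · rw [pI_mem hr hI hIs _ ha]
    have := (nextI_spec hr hI hIs h2).1
    omega
  · rw [pI_self hr hI hIs _ ha (by omega)]

lemma pI_ne_min {t : ℕ} (h1 : 1 ≤ t) (h2 : t < r) : pI r I t ≠ minI r I := by
  have hm := minI_spec hr hI hIs
  by_cases ht : t ∈ I
  · rw [pI_mem hr hI hIs _ ht]
    have := (nextI_spec hr hI hIs h2).1
    have := hm.2 t ht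
    omega
  · rw [pI_self hr hI hIs _ ht (by omega)]
    intro h
    rw [h] at ht
    exact ht hm.1

lemma key1 {s t : ℕ} (hs1 : 1 ≤ s) (hst : s < t) (htr : t < r) (hp : pI r I t < pI r I s) :
    s ∈ I ∧ t < nextI r I s ∧ pI r I s = nextI r I s ∧ pI r I t = t := by
  have hsI : s ∈ I := by
    by_contra hs
    rw [pI_self hr hI hIs _ hs (by omega)] at hp
    have := pI_ge hr hI hIs htr
    omega
  have hps : pI r I s = nextI r I s := pI_mem hr hI hIs _ hsI
  have htI : t ∉ I := by
    intro ht
    rw [pI_mem hr hI hIs _ ht] at hp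
    have h1 := nextI_le_of_mem hr hI hIs hsI ht hst
    have h2 := (nextI_spec hr hI hIs htr).1
    omega
  have hpt : pI r I t = t := pI_self hr hI hIs _ htI (by omega)
  rw [hpt, hps] at hp
  exact ⟨hsI, hp, hps, hpt⟩

lemma preim {q : ℕ} (hq1 : minI r I < q) (hq2 : q ≤ r) :
    ∃ s, 1 ≤ s ∧ s < r ∧ pI r I s = q := by
  have hm := minI_spec hr hI hIs
  have hmb := mem_bounds hr hI hIs hm.1
  by_cases hqr : q = r
  · -- s = max I
    obtain ⟨x, hx⟩ := Finset.max_of_nonempty hI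
    have hxI : x ∈ I := Finset.mem_of_max hx
    have hxmax : ∀ b ∈ I, b ≤ x := fun b hb => Finset.le_max_of_eq hb hx
    have hxb := mem_bounds hr hI hIs hxI
    refine ⟨x, by omega, by omega, ?_⟩
    rw [hqr, pI_mem hr hI hIs _ hxI]
    have hsp := nextI_spec hr hI hIs (show x < r by omega)
    rcases Finset.mem_insert.mp hsp.2.2.1 with h | h
    · exact h
    · exfalso
      have := hxmax _ h
      have := hsp.1
      omega
  · by_cases hqI : q ∈ I
    · -- s = max of elements of I below q
      have hne : (I.filter (fun x => x < q)).Nonempty := ⟨minI r I, by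
        rw [Finset.mem_filter]; exact ⟨hm.1, hq1⟩⟩
      obtain ⟨x, hx⟩ := Finset.max_of_nonempty hne
      have hxmem := Finset.mem_of_max hx
      have hxmax : ∀ b ∈ I.filter (fun x => x < q), b ≤ x := fun b hb => Finset.le_max_of_eq hb hx
      rw [Finset.mem_filter] at hxmem
      have hxb := mem_bounds hr hI hIs hxmem.1
      refine ⟨x, by omega, by omega, ?_⟩
      rw [pI_mem hr hI hIs _ hxmem.1]
      have hsp := nextI_spec hr hI hIs (show x < r by omega)
      have hle : nextI r I x ≤ q :=
        hsp.2.2.2 q (Finset.mem_insert_of_mem hqI) hxmem.2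
      rcases Nat.lt_or_ge (nextI r I x) q with hlt | hge
      · exfalso
        rcases Finset.mem_insert.mp hsp.2.2.1 with h | h
        · omega
        · have := hxmax (nextI r I x) (Finset.mem_filter.mpr ⟨h, hlt⟩)
          have := hsp.1
          omega
      · omega
    · refine ⟨q, by omega, by omega, pI_self hr hI hIs _ hqI hqr⟩

end


lemma cI_pair (r : ℕ) (I : Finset ℕ) (u v : ℕ) (ε : ℝ) (hu1 : 1 ≤ u) (hur : u ≤ r)
    (hv1 : 1 ≤ v) (hvr : v ≤ r) (huv : u ≠ v) :
    cI r I (ee r u + ε • ee r v) = cIb r I u + ε • cIb r I v := by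
  unfold cI
  have e1 : ∀ j ∈ Icc 1 r, coordN r (ee r u + ε • ee r v) j • cIb r I j
      = (if j = u then cIb r I j else 0) + (if j = v then ε • cIb r I j else 0) := by
    intro j hj
    simp only [Finset.mem_Icc] at hj
    rw [coordN_add, coordN_smul, coordN_ee' r u j hj.1 hj.2, coordN_ee' r v j hj.1 hj.2]
    rcases eq_or_ne j u with h | h
    · have hjv : j ≠ v := by omega
      simp [h, hjv, huv]
    · rcases eq_or_ne j v with h' | h'
      · subst h'
        rw [if_neg h, if_neg h, if_pos rfl, if_pos rfl]
        simp
      · simp [h, h']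
  rw [Finset.sum_congr rfl e1, Finset.sum_add_distrib, Finset.sum_ite_eq', Finset.sum_ite_eq',
    if_pos (by simp [Finset.mem_Icc]; omega), if_pos (by simp [Finset.mem_Icc]; omega)]

lemma cI_sub (r : ℕ) (I : Finset ℕ) (u v : ℕ) (hu1 : 1 ≤ u) (hur : u ≤ r)
    (hv1 : 1 ≤ v) (hvr : v ≤ r) (huv : u ≠ v) :
    cI r I (ee r u - ee r v) = cIb r I u - cIb r I v := by
  have := cI_pair r I u v (-1) hu1 hur hv1 hvr huv
  simp only [neg_one_smul, ← sub_eq_add_neg] at this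
  exact this

lemma cI_add (r : ℕ) (I : Finset ℕ) (u v : ℕ) (hu1 : 1 ≤ u) (hur : u ≤ r)
    (hv1 : 1 ≤ v) (hvr : v ≤ r) (huv : u ≠ v) :
    cI r I (ee r u + ee r v) = cIb r I u + cIb r I v := by
  have := cI_pair r I u v 1 hu1 hur hv1 hvr huv
  simp only [one_smul] at this
  exact this

lemma cIb_ne (r : ℕ) (I : Finset ℕ) (u : ℕ) (h : u ≠ r) : cIb r I u = -(ee r (pI r I u)) := by
  unfold cIb; rw [if_neg h]

lemma cIb_r (r : ℕ) (I : Finset ℕ) : cIb r I r = ee r (minI r I) := by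
  unfold cIb; rw [if_pos rfl]

section
variable {r : ℕ} {I : Finset ℕ} (hr : 5 ≤ r) (hI : I.Nonempty) (hIs : I ⊆ Finset.Icc 1 (r - 1))
include hr hI hIs

lemma LfR {i : ℕ} (h1 : 1 ≤ i) (h2 : i ≤ r) : Lf r r (ee r i) = 1 := by
  rw [Lf_ee r r i le_rfl h1 h2, if_pos h2]

lemma classify (γ α : Fin r → ℝ) (hγ : γ ∈ Pos r) (hα : α ∈ Pos r) (h : cI r I γ = α) :
    (∃ a b, a ∈ I ∧ a < b ∧ b < nextI r I a ∧ γ = ee r a - ee r b ∧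
      α = ee r b - ee r (nextI r I a)) ∨
    (∃ s q, 1 ≤ s ∧ s < r ∧ minI r I < q ∧ q ≤ r ∧ γ = ee r s + ee r r ∧
      α = ee r (minI r I) - ee r q) := by
  obtain ⟨s, t, hs1, hst, htr, hγ'⟩ := hγ
  obtain ⟨i, j, hi1, hij, hjr, hα'⟩ := hα
  have hm := minI_spec hr hI hIs
  have hmb := mem_bounds hr hI hIs hm.1
  have hpsb := pI_bounds hr hI hIs (show 1 ≤ s by omega) (show s ≤ r by omega)
  have hptb := pI_bounds hr hI hIs (show 1 ≤ t by omega) (show t ≤ r by omega)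
  rcases hγ' with hγ' | hγ'
  · -- γ = e_s - e_t
    subst hγ'
    by_cases htr' : t = r
    · -- cγ = -e_{ps} - e_m, sum -2: contradiction
      exfalso
      rw [cI_sub r I s t (by omega) (by omega) (by omega) (by omega) (by omega),
        cIb_ne r I s (by omega), htr', cIb_r] at h
      have h2 := congrArg (Lf r r) h
      rw [Lf_sub, Lf_neg, LfR hr hI hIs hpsb.1 hpsb.2, LfR hr hI hIs hmb.1 (by omega)] at h2
      rcases hα' with h' | h' <;> rw [h'] at h2
      · rw [Lf_sub, LfR hr hI hIs hi1 (by omega), LfR hr hI hIs (by omega : 1 ≤ j) hjr] at h2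
        norm_num at h2
      · rw [Lf_add, LfR hr hI hIs hi1 (by omega), LfR hr hI hIs (by omega : 1 ≤ j) hjr] at h2
        norm_num at h2
    · rw [cI_sub r I s t (by omega) (by omega) (by omega) (by omega) (by omega),
        cIb_ne r I s (by omega), cIb_ne r I t htr'] at h
      have h : ee r (pI r I t) - ee r (pI r I s) = α := by rw [← h]; abel
      rcases hα' with h' | h'
      · -- e_{pt} - e_{ps} = e_i - e_j
        rw [h'] at h
        obtain ⟨hpt, hps⟩ := sub_ee_inj r (pI r I t) (pI r I s) i j hptb.1 hptb.2 hpsb.1 hpsb.2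
          hi1 (by omega) (by omega) hjr (by omega) h
        have hlt : pI r I t < pI r I s := by omega
        obtain ⟨hsI, htn, hps', hpt'⟩ := key1 hr hI hIs (by omega) hst (by omega) hlt
        left
        refine ⟨s, t, hsI, hst, htn, rfl, ?_⟩
        rw [h', ← hpt, ← hps, hpt', hps']
      · -- sum 0 vs 2
        exfalso
        have h2 := congrArg (Lf r r) h
        rw [h', Lf_sub, LfR hr hI hIs hptb.1 hptb.2, LfR hr hI hIs hpsb.1 hpsb.2,
          Lf_add, LfR hr hI hIs hi1 (by omega), LfR hr hI hIs (by omega : 1 ≤ j) hjr] at h2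
        norm_num at h2
  · -- γ = e_s + e_t
    subst hγ'
    by_cases htr' : t = r
    · rw [cI_add r I s t (by omega) (by omega) (by omega) (by omega) (by omega),
        cIb_ne r I s (by omega), htr', cIb_r] at h
      have h : ee r (minI r I) - ee r (pI r I s) = α := by rw [← h]; abel
      rcases hα' with h' | h'
      · rw [h'] at h
        obtain ⟨hmi, hps⟩ := sub_ee_inj r (minI r I) (pI r I s) i j hmb.1 (by omega)
          hpsb.1 hpsb.2 hi1 (by omega) (by omega) hjr (by omega) h
        right
        refine ⟨s, j, by omega, by omega, by omega, hjr, by rw [htr'], ?_⟩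
        rw [h', ← hmi]
      · exfalso
        have h2 := congrArg (Lf r r) h
        rw [h', Lf_sub, LfR hr hI hIs hmb.1 (by omega), LfR hr hI hIs hpsb.1 hpsb.2,
          Lf_add, LfR hr hI hIs hi1 (by omega), LfR hr hI hIs (by omega : 1 ≤ j) hjr] at h2
        norm_num at h2
    · exfalso
      rw [cI_add r I s t (by omega) (by omega) (by omega) (by omega) (by omega),
        cIb_ne r I s (by omega), cIb_ne r I t htr'] at h
      have h2 := congrArg (Lf r r) h
      rw [Lf_add, Lf_neg, Lf_neg, LfR hr hI hIs hpsb.1 hpsb.2, LfR hr hI hIs hptb.1 hptb.2] at h2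
      rcases hα' with h' | h' <;> rw [h'] at h2
      · rw [Lf_sub, LfR hr hI hIs hi1 (by omega), LfR hr hI hIs (by omega : 1 ≤ j) hjr] at h2
        norm_num at h2
      · rw [Lf_add, LfR hr hI hIs hi1 (by omega), LfR hr hI hIs (by omega : 1 ≤ j) hjr] at h2
        norm_num at h2

end


lemma sum_arith_int (r a : ℕ) : ∀ n, a < n → n ≤ r →
    2 * ∑ b ∈ Ioo a n, ((r:ℤ) + 1 - b) = ((n:ℤ) - a - 1) * (2*(r:ℤ) + 2 - a - n) := by
  intro n
  induction n with
  | zero => omega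
  | succ n ih =>
    intro h1 h2
    have hIoo : Ioo a (n+1) = Ioc a n := by ext x; simp [Finset.mem_Ioo, Finset.mem_Ioc]
    rcases Nat.lt_or_ge a n with h | h
    · rw [hIoo, ← Finset.Ioo_insert_right h, Finset.sum_insert (by simp), mul_add]
      have := ih h (by omega)
      push_cast
      push_cast at this
      linear_combination this
    · have ha : a = n := by omega
      rw [hIoo, ha, Finset.Ioc_self]
      simp

lemma sum_arith (r a n : ℕ) (h1 : a < n) (h2 : n ≤ r) :
    2 * ∑ b ∈ Ioo a n, (r + 1 - b) = (n - a - 1) * (2*r + 2 - a - n) := by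
  have hZ := sum_arith_int r a n h1 h2
  have e1 : ((∑ b ∈ Ioo a n, (r + 1 - b) : ℕ) : ℤ) = ∑ b ∈ Ioo a n, ((r:ℤ) + 1 - b) := by
    rw [Nat.cast_sum]
    refine Finset.sum_congr rfl fun b hb => ?_
    simp only [Finset.mem_Ioo] at hb
    omega
  have e2 : (((n - a - 1) * (2*r + 2 - a - n) : ℕ) : ℤ)
      = ((n:ℤ) - a - 1) * (2*(r:ℤ) + 2 - a - n) := by
    rw [Nat.cast_mul]
    congr 1 <;> omega
  have key : ((2 * ∑ b ∈ Ioo a n, (r + 1 - b) : ℕ) : ℤ)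
      = (((n - a - 1) * (2*r + 2 - a - n) : ℕ) : ℤ) := by
    rw [Nat.cast_mul, e1, e2, Nat.cast_ofNat]
    exact hZ
  exact Nat.cast_inj.mp key

section
variable {r : ℕ} {I : Finset ℕ} (hr : 5 ≤ r) (hI : I.Nonempty) (hIs : I ⊆ Finset.Icc 1 (r - 1))
include hr hI hIs

lemma cI_A {a b : ℕ} (ha : a ∈ I) (hab : a < b) (hb : b < nextI r I a) :
    cI r I (ee r a - ee r b) = ee r b - ee r (nextI r I a) := by
  have hab' := mem_bounds hr hI hIs ha
  have hsp := nextI_spec hr hI hIs (show a < r by omega)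
  have hbI : b ∉ I := notin_of_between hr hI hIs hab hb
  rw [cI_sub r I a b (by omega) (by omega) (by omega) (by omega) (by omega),
    cIb_ne r I a (by omega), cIb_ne r I b (by omega),
    pI_mem hr hI hIs a ha, pI_self hr hI hIs b hbI (by omega)]
  abel

lemma cI_B {s q : ℕ} (hs1 : 1 ≤ s) (hsr : s < r) (hps : pI r I s = q) :
    cI r I (ee r s + ee r r) = ee r (minI r I) - ee r q := by
  rw [cI_add r I s r hs1 (by omega) (by omega) le_rfl (by omega),
    cIb_ne r I s (by omega), cIb_r, hps]
  abel

end

section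
variable {r : ℕ} {I : Finset ℕ} (hr : 5 ≤ r) (hI : I.Nonempty) (hIs : I ⊆ Finset.Icc 1 (r - 1))
include hr hI hIs

lemma A_mem_nu0 {a b : ℕ} (ha : a ∈ I) (hab : a < b) (hb : b < nextI r I a) :
    (ee r b - ee r (nextI r I a)) ∈ nu0 r (cI r I) := by
  have hab' := mem_bounds hr hI hIs ha
  have hsp := nextI_spec hr hI hIs (show a < r by omega)
  exact ⟨⟨b, nextI r I a, by omega, hb, hsp.2.1, Or.inl rfl⟩,
    ee r a - ee r b, ⟨a, b, by omega, hab, by omega, Or.inl rfl⟩, cI_A hr hI hIs ha hab hb⟩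

lemma B_mem_nu0 {q : ℕ} (hq1 : minI r I < q) (hq2 : q ≤ r) :
    (ee r (minI r I) - ee r q) ∈ nu0 r (cI r I) := by
  have hm := minI_spec hr hI hIs
  have hmb := mem_bounds hr hI hIs hm.1
  obtain ⟨s, hs1, hsr, hps⟩ := preim hr hI hIs hq1 hq2
  exact ⟨⟨minI r I, q, hmb.1, hq1, hq2, Or.inl rfl⟩,
    ee r s + ee r r, ⟨s, r, hs1, hsr, le_rfl, Or.inr rfl⟩, cI_B hr hI hIs hs1 hsr hps⟩

lemma arrow_AB {a b q : ℕ} (ha : a ∈ I) (hab : a < b) (hb : b < nextI r I a)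
    (hbq : b ≤ q) (hq2 : q ≤ r) :
    Arrow r (cI r I) (ee r b - ee r (nextI r I a)) (ee r (minI r I) - ee r q) := by
  have hab' := mem_bounds hr hI hIs ha
  have hsp := nextI_spec hr hI hIs (show a < r by omega)
  have hm := minI_spec hr hI hIs
  have hmb := mem_bounds hr hI hIs hm.1
  have hma : minI r I ≤ a := hm.2 a ha
  refine ⟨ee r a - ee r b, ⟨a, b, by omega, hab, by omega, Or.inl rfl⟩,
    cI_A hr hI hIs ha hab hb, ?_⟩
  apply rootLE_of_eq r (minI r I) a b q hmb.1 hma (by omega) (by omega) hbq hq2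
  abel

end


/-- twice the number of arrows of `Γ_{c_I}` equals
`Σ_j (n_I(i_j) - i_j - 1)(2r - i_j - n_I(i_j) + 2)`; for `I = {1}` twice the
number of arrows is `(r-2)(r+1)`. -/
theorem stmt11 (r : ℕ) (hr : 5 ≤ r) (hodd : Odd r)
    (I : Finset ℕ) (hI : I.Nonempty) (hIs : I ⊆ Finset.Icc 1 (r - 1)) :
    2 * ({p : (Fin r → ℝ) × (Fin r → ℝ) |
          p.1 ∈ nu0 r (cI r I) ∧ p.2 ∈ nu0 r (cI r I) ∧
          Arrow r (cI r I) p.1 p.2}.ncard)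
      = ∑ a ∈ I, (nextI r I a - a - 1) * (2 * r + 2 - a - nextI r I a) ∧
    (I = {1} →
      2 * ({p : (Fin r → ℝ) × (Fin r → ℝ) |
            p.1 ∈ nu0 r (cI r I) ∧ p.2 ∈ nu0 r (cI r I) ∧
            Arrow r (cI r I) p.1 p.2}.ncard) = (r - 2) * (r + 1)) := by
  classical
  have hm := minI_spec hr hI hIs
  have hmb := mem_bounds hr hI hIs hm.1
  set S := {p : (Fin r → ℝ) × (Fin r → ℝ) |
      p.1 ∈ nu0 r (cI r I) ∧ p.2 ∈ nu0 r (cI r I) ∧ Arrow r (cI r I) p.1 p.2} with hS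
  set T : Finset (ℕ × ℕ × ℕ) := (I ×ˢ (Icc 1 r ×ˢ Icc 1 r)).filter
      (fun x => x.1 < x.2.1 ∧ x.2.1 < nextI r I x.1 ∧ x.2.1 ≤ x.2.2) with hT
  set f : ℕ × ℕ × ℕ → (Fin r → ℝ) × (Fin r → ℝ) := fun x =>
      (ee r x.2.1 - ee r (nextI r I x.1), ee r (minI r I) - ee r x.2.2) with hf
  have hmemT : ∀ a b q : ℕ, (a, b, q) ∈ T ↔
      (a ∈ I ∧ a < b ∧ b < nextI r I a ∧ b ≤ q ∧ q ≤ r) := by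
    intro a b q
    rw [hT, Finset.mem_filter, Finset.mem_product, Finset.mem_product]
    simp only [Finset.mem_Icc]
    constructor
    · rintro ⟨⟨ha, ⟨hb1, hb2⟩, hq1, hq2⟩, h1, h2, h3⟩
      exact ⟨ha, h1, h2, h3, hq2⟩
    · rintro ⟨ha, h1, h2, h3, h4⟩
      have := mem_bounds hr hI hIs ha
      have hsp := nextI_spec hr hI hIs (show a < r by omega)
      exact ⟨⟨ha, ⟨by omega, by omega⟩, by omega, by omega⟩, h1, h2, h3⟩
  have hSeq : S = ↑(T.image f) := by
    ext ⟨α, β⟩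
    simp only [hS, Set.mem_setOf_eq, Finset.coe_image, Set.mem_image, Finset.mem_coe]
    constructor
    · rintro ⟨hα, hβ, γ, hγP, hγeq, hle⟩
      obtain ⟨hαP, γa, hγaP, hγa⟩ := hα
      obtain ⟨hβP, γb, hγbP, hγb⟩ := hβ
      rcases classify hr hI hIs γ α hγP hαP hγeq with
        ⟨a, b, ha, hab, hb, hγ', hα'⟩ | ⟨s, q, hs1, hsr, hq1, hq2, hγ', hα'⟩
      · have hab' := mem_bounds hr hI hIs ha
        have hsp := nextI_spec hr hI hIs (show a < r by omega)
        rcases classify hr hI hIs γb β hγbP hβP hγb with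
          ⟨a2, b2, ha2, hab2, hb2, hγb', hβ'⟩ | ⟨s2, q2, hs21, hs2r, hq21, hq22, hγb', hβ'⟩
        · exfalso
          have hab2' := mem_bounds hr hI hIs ha2
          have hsp2 := nextI_spec hr hI hIs (show a2 < r by omega)
          have hno : ¬ (b2 ≤ a ∧ a < nextI r I a2) := by
            rintro ⟨hh1, hh2⟩
            rcases Nat.lt_trichotomy a a2 with hlt | heq | hgt
            · omega
            · omega
            · have := nextI_le_of_mem hr hI hIs ha2 ha hgt
              omega
          refine absurd hle (not_rootLE r a (by omega) (by omega) γ β ?_)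
          rw [hγ', hβ', Lf_sub, Lf_sub,
            Lf_ee r a b2 (by omega) (by omega) (by omega),
            Lf_ee r a (nextI r I a2) (by omega) (by omega) (by omega),
            Lf_ee r a a (by omega) (by omega) (by omega),
            Lf_ee r a b (by omega) (by omega) (by omega)]
          split_ifs <;> first | (exfalso; omega) | norm_num
        · rcases le_or_gt b q2 with hbq | hbq
          · refine ⟨(a, b, q2), (hmemT a b q2).mpr ⟨ha, hab, hb, hbq, hq22⟩, ?_⟩
            simp only [hf]
            rw [hα', hβ']
          · exfalso
            have hma : minI r I ≤ a := hm.2 a ha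
            refine absurd hle (not_rootLE r (max a q2) (by omega) (by omega) γ β ?_)
            rw [hγ', hβ', Lf_sub, Lf_sub,
              Lf_ee r _ (minI r I) (by omega) (by omega) (by omega),
              Lf_ee r _ q2 (by omega) (by omega) (by omega),
              Lf_ee r _ a (by omega) (by omega) (by omega),
              Lf_ee r _ b (by omega) (by omega) (by omega)]
            rw [if_pos (by omega), if_pos (by omega), if_pos (by omega), if_neg (by omega)]
            norm_num
      · exfalso
        have hLfβ : Lf r r β = 0 := by
          rcases classify hr hI hIs γb β hγbP hβP hγb with
            ⟨a2, b2, ha2, hab2, hb2, _, hβ'⟩ | ⟨s2, q2, _, _, hq21, hq22, _, hβ'⟩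
          · have hab2' := mem_bounds hr hI hIs ha2
            have hsp2 := nextI_spec hr hI hIs (show a2 < r by omega)
            rw [hβ', Lf_sub, LfR hr hI hIs (by omega) (by omega),
              LfR hr hI hIs (by omega) (by omega)]
            norm_num
          · rw [hβ', Lf_sub, LfR hr hI hIs (by omega) (by omega),
              LfR hr hI hIs (by omega) (by omega)]
            norm_num
        refine absurd hle (not_rootLE r r (by omega) le_rfl γ β ?_)
        rw [hγ', Lf_add, LfR hr hI hIs (by omega) (by omega), LfR hr hI hIs (by omega) le_rfl,
          hLfβ]
        norm_num
    · rintro ⟨⟨a, b, q⟩, hmem, heq⟩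
      rw [hmemT a b q] at hmem
      obtain ⟨ha, hab, hb, hbq, hqr⟩ := hmem
      have hma : minI r I ≤ a := hm.2 a ha
      have hq1 : minI r I < q := by omega
      simp only [hf] at heq
      obtain ⟨h1, h2⟩ := Prod.mk.inj heq
      rw [← h1, ← h2]
      exact ⟨A_mem_nu0 hr hI hIs ha hab hb, B_mem_nu0 hr hI hIs hq1 hqr,
        arrow_AB hr hI hIs ha hab hb hbq hqr⟩
  have hcard : S.ncard = T.card := by
    rw [hSeq, Set.ncard_coe_finset]
    apply Finset.card_image_of_injOn
    rintro ⟨a, b, q⟩ hx ⟨a2, b2, q2⟩ hy hxy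
    rw [Finset.mem_coe, hmemT] at hx hy
    simp only [hf] at hxy
    obtain ⟨h1, h2⟩ := Prod.mk.inj hxy
    have hab' := mem_bounds hr hI hIs hx.1
    have hsp := nextI_spec hr hI hIs (show a < r by omega)
    have hab2' := mem_bounds hr hI hIs hy.1
    have hsp2 := nextI_spec hr hI hIs (show a2 < r by omega)
    obtain ⟨hb, hn⟩ := sub_ee_inj r b (nextI r I a) b2 (nextI r I a2)
      (by omega) (by omega) (by omega) (by omega) (by omega) (by omega) (by omega) (by omega)
      (by omega) h1
    have haa : a = a2 := nextI_inj hr hI hIs hx.1 hy.1 hn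
    have hma := hm.2 a hx.1
    have hma2 := hm.2 a2 hy.1
    obtain ⟨-, hq⟩ := sub_ee_inj r (minI r I) q (minI r I) q2
      (by omega) (by omega) (by omega) (by omega) (by omega) (by omega) (by omega) (by omega)
      (by omega) h2
    simp only [Prod.mk.injEq]
    exact ⟨haa, hb, hq⟩
  have hTcard : 2 * T.card = ∑ a ∈ I, (nextI r I a - a - 1) * (2 * r + 2 - a - nextI r I a) := by
    rw [hT, Finset.card_filter, Finset.sum_product, Finset.mul_sum]
    refine Finset.sum_congr rfl fun a ha => ?_
    have hab' := mem_bounds hr hI hIs ha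
    have hsp := nextI_spec hr hI hIs (show a < r by omega)
    rw [Finset.sum_product]
    have e2 : ∀ b ∈ Icc 1 r,
        (∑ q ∈ Icc 1 r, if a < b ∧ b < nextI r I a ∧ b ≤ q then 1 else 0)
        = if a < b ∧ b < nextI r I a then (r + 1 - b) else 0 := by
      intro b hb
      simp only [Finset.mem_Icc] at hb
      by_cases hcond : a < b ∧ b < nextI r I a
      · rw [if_pos hcond]
        have e3 : ∀ q ∈ Icc 1 r, (if a < b ∧ b < nextI r I a ∧ b ≤ q then (1:ℕ) else 0)
            = if b ≤ q then 1 else 0 := by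
          intro q hq
          by_cases h : b ≤ q
          · rw [if_pos ⟨hcond.1, hcond.2, h⟩, if_pos h]
          · rw [if_neg (by tauto), if_neg h]
        rw [Finset.sum_congr rfl e3, ← Finset.card_filter]
        have : (Icc 1 r).filter (fun q => b ≤ q) = Icc b r := by
          ext x; simp [Finset.mem_Icc]; omega
        rw [this, Nat.card_Icc]
      · rw [if_neg hcond]
        apply Finset.sum_eq_zero
        intro q hq
        rw [if_neg (by tauto)]
    rw [Finset.sum_congr rfl e2, ← Finset.sum_filter]
    have e4 : (Icc 1 r).filter (fun b => a < b ∧ b < nextI r I a) = Ioo a (nextI r I a) := by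
      ext x; simp [Finset.mem_Icc, Finset.mem_Ioo]; omega
    rw [e4, sum_arith r a (nextI r I a) hsp.1 hsp.2.1]
  constructor
  · rw [hcard]; exact hTcard
  · intro h1
    subst h1
    rw [hcard, hTcard, Finset.sum_singleton]
    have hnext : nextI r ({1} : Finset ℕ) 1 = r := by
      have hsp := nextI_spec hr hI hIs (show (1:ℕ) < r by omega)
      rcases Finset.mem_insert.mp hsp.2.2.1 with h | h
      · exact h
      · simp only [Finset.mem_singleton] at h
        have := hsp.1
        omega
    rw [hnext]
    congr 1 <;> omega

end
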